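/- There exists a > 4 and constants η ∈ (0,1), δ ∈ (0,1) such that η⁻¹·δ⁻¹·(∫ g_a^3)/(∫ g_a^2)^3 < 1, where the integrals are over (-1/2,1/2). -/

import Mathlib

open MeasureTheory

/-- The piecewise design density `g_a`: even, equal to `a/4` on `(0,1/a)`,
linear on `(1/a,2/a)`, equal to `a/(4(a-3))` on `(2/a,1/2)`, and `0` beyond `1/2`. -/
noncomputable def gdens (a x : ℝ) : ℝ :=
  if |x| < 1 / a then a / 4
  else if |x| < 2 / a then a / 4 + (|x| - 1 / a) * a * (a / (4 * (a - 3)) - a / 4)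
  else if |x| ≤ 1 / 2 then a / (4 * (a - 3))
  else 0

/-!
`g_a` is even and piecewise affine, so its moments are explicit rational functions of `a`:
on `(0, 1/2)` it is constant, then affine, then constant again. At `a = 8` this gives
`∫ g² = 112/75` and `∫ g³ = 332/125`, so `∫ g³ / (∫ g²)³ ≈ 0.80`, which leaves room
for `η = δ = 19/20`.
-/

open Set intervalIntegral

lemma integral_mul_add_pow {d : ℝ} (hd : d ≠ 0) (c l r : ℝ) (k : ℕ) :
    ∫ x in l..r, (d * x + c) ^ k =
      ((d * r + c) ^ (k + 1) - (d * l + c) ^ (k + 1)) / (d * (k + 1)) := by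
  rw [integral_comp_mul_add (fun x => x ^ k) hd, integral_pow, smul_eq_mul]
  field_simp

lemma integral_Ioo_neg_eq_two_mul_of_even {f : ℝ → ℝ} (hf : ∀ x, f (-x) = f x) {c : ℝ}
    (hc : 0 ≤ c) (hint : IntervalIntegrable f volume (-c) c) :
    ∫ x in Ioo (-c) c, f x = 2 * ∫ x in 0..c, f x := by
  have hleft : ∫ x in -c..0, f x = ∫ x in 0..c, f x := by
    simpa [hf] using (integral_comp_neg (a := 0) (b := c) f).symm
  rw [← integral_Ioc_eq_integral_Ioo, ← integral_of_le (by linarith),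
    ← integral_add_adjacent_intervals (b := 0)
      (hint.mono_set (by rw [uIcc_of_le (by linarith), uIcc_of_le (by linarith)]; gcongr))
      (hint.mono_set (by rw [uIcc_of_le hc, uIcc_of_le (by linarith)]; gcongr; linarith)),
    hleft, two_mul]

section gdens

variable {a x : ℝ}

lemma gdens_neg : gdens a (-x) = gdens a x := by
  simp only [gdens, abs_neg]

lemma measurable_gdens (a : ℝ) : Measurable (gdens a) := by
  unfold gdens
  refine Measurable.ite ?_ measurable_const (Measurable.ite ?_ (by fun_prop)
    (Measurable.ite ?_ measurable_const measurable_const))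
  · exact measurableSet_lt measurable_abs measurable_const
  · exact measurableSet_lt measurable_abs measurable_const
  · exact measurableSet_le measurable_abs measurable_const

lemma abs_gdens_le (ha : 4 ≤ a) (x : ℝ) : |gdens a x| ≤ a / 4 := by
  have hq₀ : 0 ≤ a / (4 * (a - 3)) := div_nonneg (by linarith) (by linarith)
  have hqp : a / (4 * (a - 3)) ≤ a / 4 := by gcongr; linarith
  unfold gdens
  split_ifs with h₁ h₂ h₃
  · rw [abs_of_nonneg (by linarith)]
  · -- the ramp value is a convex combination of `a/4` and `a/(4(a-3))`
    have ht₀ : 0 ≤ (|x| - 1 / a) * a := mul_nonneg (by linarith) (by linarith)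
    have ht₁ : (|x| - 1 / a) * a ≤ 1 := by
      have : |x| * a < 2 / a * a := by gcongr
      rw [sub_mul, div_mul_cancel₀ _ (by positivity)]
      rw [div_mul_cancel₀ _ (by positivity)] at this
      linarith
    rw [abs_le]
    constructor <;> nlinarith
  · rwa [abs_of_nonneg hq₀]
  · simp only [abs_zero]; linarith

lemma intervalIntegrable_gdens_pow (ha : 4 ≤ a) (k : ℕ) (l r : ℝ) :
    IntervalIntegrable (fun x => gdens a x ^ k) volume l r := by
  rw [intervalIntegrable_iff]
  refine Measure.integrableOn_of_bounded (M := (a / 4) ^ k) measure_Ioc_lt_top.ne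
    ((measurable_gdens a).pow_const k).aestronglyMeasurable (Filter.Eventually.of_forall ?_)
  intro x
  rw [norm_pow, Real.norm_eq_abs]
  exact pow_le_pow_left₀ (abs_nonneg _) (abs_gdens_le ha x) k

lemma gdens_eq_of_mem_Ioo_inner (hx : x ∈ Ioo 0 (1 / a)) : gdens a x = a / 4 := by
  rw [gdens, if_pos (by rw [abs_of_pos hx.1]; exact hx.2)]

lemma gdens_eq_of_mem_Ioo_ramp (ha : 0 < a) (hx : x ∈ Ioo (1 / a) (2 / a)) :
    gdens a x = a * (a / (4 * (a - 3)) - a / 4) * x + (2 * (a / 4) - a / (4 * (a - 3))) := by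
  have hx₀ : 0 < x := lt_trans (by positivity) hx.1
  rw [gdens, if_neg (by rw [abs_of_pos hx₀]; exact hx.1.le.not_gt),
    if_pos (by rw [abs_of_pos hx₀]; exact hx.2), abs_of_pos hx₀]
  field_simp
  ring

lemma gdens_eq_of_mem_Ioo_outer (ha : 0 < a) (hx : x ∈ Ioo (2 / a) (1 / 2)) :
    gdens a x = a / (4 * (a - 3)) := by
  have h₁₂ : 1 / a < 2 / a := by gcongr; norm_num
  have hx₀ : 0 < x := lt_trans (by positivity) hx.1
  rw [gdens, abs_of_pos hx₀, if_neg (by linarith [hx.1]), if_neg hx.1.le.not_gt,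
    if_pos hx.2.le]

end gdens

lemma integral_gdens_pow {a : ℝ} (ha : 4 < a) (k : ℕ) :
    ∫ x in Ioo (-(1 / 2) : ℝ) (1 / 2), gdens a x ^ k =
      2 * ((a / 4) ^ k / a
        + ((a / (4 * (a - 3))) ^ (k + 1) - (a / 4) ^ (k + 1))
            / (a * (a / (4 * (a - 3)) - a / 4) * (k + 1))
        + (1 / 2 - 2 / a) * (a / (4 * (a - 3))) ^ k) := by
  have ha₀ : 0 < a := by linarith
  have hint := intervalIntegrable_gdens_pow ha.le k
  have h₀₁ : 0 ≤ 1 / a := by positivity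
  have h₁₂ : 1 / a ≤ 2 / a := by gcongr; norm_num
  have h₂₃ : 2 / a ≤ 1 / 2 := by rw [div_le_div_iff₀ ha₀ two_pos]; linarith
  have hqp : a / (4 * (a - 3)) < a / 4 := by gcongr; linarith
  set p := a / 4
  set q := a / (4 * (a - 3))
  have hslope : a * (q - p) ≠ 0 := mul_ne_zero ha₀.ne' (sub_ne_zero.mpr hqp.ne)
  rw [integral_Ioo_neg_eq_two_mul_of_even (fun x => by rw [gdens_neg]) (by norm_num) (hint _ _),
    ← integral_add_adjacent_intervals (hint 0 (1 / a)) (hint _ _),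
    ← integral_add_adjacent_intervals (hint (1 / a) (2 / a)) (hint _ _),
    integral_congr_Ioo_of_le h₀₁ (g := fun _ => p ^ k)
      (fun x hx => by simp only [gdens_eq_of_mem_Ioo_inner hx, p]),
    integral_congr_Ioo_of_le h₁₂ (g := fun x => (a * (q - p) * x + (2 * p - q)) ^ k)
      (fun x hx => by simp only [gdens_eq_of_mem_Ioo_ramp ha₀ hx, p, q]),
    integral_congr_Ioo_of_le h₂₃ (g := fun _ => q ^ k)
      (fun x hx => by simp only [gdens_eq_of_mem_Ioo_outer ha₀ hx, q]),
    integral_mul_add_pow hslope]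
  have hp : a * (q - p) * (1 / a) + (2 * p - q) = p := by field_simp; ring
  have hq : a * (q - p) * (2 / a) + (2 * p - q) = q := by field_simp; ring
  simp only [intervalIntegral.integral_const, smul_eq_mul, hp, hq]
  ring

theorem exists_eta_delta_ratio_lt_one :
    ∃ a : ℝ, 4 < a ∧ ∃ η ∈ Set.Ioo (0:ℝ) 1, ∃ δ ∈ Set.Ioo (0:ℝ) 1,
      η⁻¹ * δ⁻¹ *
        ((∫ x in Set.Ioo (-(1/2) : ℝ) (1/2), (gdens a x) ^ 3) /
          (∫ x in Set.Ioo (-(1/2) : ℝ) (1/2), (gdens a x) ^ 2) ^ 3) < 1 := by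
  refine ⟨8, by norm_num, 19 / 20, by norm_num, 19 / 20, by norm_num, ?_⟩
  rw [integral_gdens_pow (by norm_num) 3, integral_gdens_pow (by norm_num) 2]
  norm_num
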